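/- arXiv:0803.3455 — 9 statements merged into one kernel-verified Lean document; each statement's English description precedes it below -/
import Mathlib

section
/- There exists a unique h ∈ [0,1] satisfying the fixed point equation h = f(h, γ) = 1 − γ(1 − p⁻)·G(1 − q⁻·h) − (1 − γ)(1 − p⁺)·G(1 − q⁺·h). -/
/-!
A fixed point of `f` is a zero of `φ h = h - f h`. Since `G` is convex on `[0,1]` and the
coefficients `γ(1 - p⁻)`, `(1 - γ)(1 - p⁺)` are nonnegative, `φ` is continuous and convex, with
`φ 0 = -(γ p⁻ + (1 - γ) p⁺) < 0 ≤ φ 1`. The intermediate value theorem gives a zero; a second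
zero is impossible, because on the segment from `0` to the larger zero `φ` lies below its chord,
which is negative at the smaller one.
-/

open Set

theorem ConvexOn.tsum {E : Type*} [AddCommMonoid E] [Module ℝ E] {s : Set E} {f : ℕ → E → ℝ}
    (hf : ∀ n, ConvexOn ℝ s (f n)) (hs : Convex ℝ s) (hsum : ∀ x ∈ s, Summable fun n => f n x) :
    ConvexOn ℝ s fun x => ∑' n, f n x := by
  refine ⟨hs, fun x hx y hy a b ha hb hab => ?_⟩
  have hx' := (hsum x hx).mul_left a
  have hy' := (hsum y hy).mul_left b
  calc ∑' n, f n (a • x + b • y)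
      ≤ ∑' n, (a * f n x + b * f n y) :=
        (hsum _ (hs hx hy ha hb hab)).tsum_le_tsum (fun n => (hf n).2 hx hy ha hb hab)
          (hx'.add hy')
    _ = a • ∑' n, f n x + b • ∑' n, f n y := by
        rw [hx'.tsum_add hy', tsum_mul_left, tsum_mul_left, smul_eq_mul, smul_eq_mul]

theorem ConvexOn.eq_of_map_eq_of_map_lt {s : Set ℝ} {g : ℝ → ℝ} (hg : ConvexOn ℝ s g)
    {a x y : ℝ} (ha : a ∈ s) (hx : x ∈ s) (hy : y ∈ s) (hax : a ≤ x) (hay : a ≤ y)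
    (hgx : g a < g x) (hxy : g x = g y) : x = y := by
  wlog hlt : x < y generalizing x y
  · rcases (not_lt.mp hlt).eq_or_lt with h | h
    · exact h.symm
    · exact (this hy hx hay hax (hxy ▸ hgx) hxy.symm h).symm
  have hax' : a < x := hax.lt_of_ne (by rintro rfl; exact hgx.false)
  have hseg : x ∈ openSegment ℝ a y := by
    rw [openSegment_eq_Ioo (hax'.trans hlt)]
    exact ⟨hax', hlt⟩
  exact absurd hxy (hg.lt_right_of_left_lt ha hy hseg hgx).ne

theorem existsUnique_eq_of_concaveOn {f : ℝ → ℝ} {a b : ℝ} (hab : a ≤ b)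
    (hcont : ContinuousOn f (Icc a b)) (hconc : ConcaveOn ℝ (Icc a b) f)
    (ha : a < f a) (hb : f b ≤ b) : ∃! x, x ∈ Icc a b ∧ x = f x := by
  set φ : ℝ → ℝ := fun x => x - f x
  have hφ : ConvexOn ℝ (Icc a b) φ := (convexOn_id (convex_Icc a b)).sub hconc
  obtain ⟨x, hx, hφx⟩ : ∃ x ∈ Icc a b, φ x = 0 :=
    intermediate_value_Icc hab (continuousOn_id.sub hcont) ⟨by simp; linarith, by simp [hb]⟩
  refine ⟨x, ⟨hx, sub_eq_zero.mp hφx⟩, fun y ⟨hy, hyf⟩ => ?_⟩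
  have hφa : φ a < φ x := by simp only [φ, hφx]; linarith
  exact (hφ.eq_of_map_eq_of_map_lt (left_mem_Icc.mpr hab) hx hy hx.1 hy.1 hφa
    (by simp only [φ, hφx, ← hyf, sub_self])).symm

theorem one_sub_mul_mem_Icc {q h : ℝ} (hq : q ∈ Icc (0 : ℝ) 1) (hh : h ∈ Icc (0 : ℝ) 1) :
    1 - q * h ∈ Icc (0 : ℝ) 1 :=
  ⟨by nlinarith [hq.2, hh.2, hq.1, hh.1], by nlinarith [hq.1, hh.1]⟩

noncomputable def genFun (P : ℕ → ℝ) (x : ℝ) : ℝ := ∑' n, P n * x ^ n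

section genFun

variable {P : ℕ → ℝ}

theorem genFun_nonneg (hP : ∀ n, 0 ≤ P n) {x : ℝ} (hx : 0 ≤ x) : 0 ≤ genFun P x :=
  tsum_nonneg fun n => mul_nonneg (hP n) (pow_nonneg hx n)

theorem genFun_one : genFun P 1 = ∑' n, P n := by
  simp [genFun]

theorem norm_genFun_term_le (hP : ∀ n, 0 ≤ P n) {x : ℝ} (hx : x ∈ Icc (0 : ℝ) 1) (n : ℕ) :
    ‖P n * x ^ n‖ ≤ P n := by
  rw [Real.norm_of_nonneg (mul_nonneg (hP n) (pow_nonneg hx.1 n))]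
  exact mul_le_of_le_one_right (hP n) (pow_le_one₀ hx.1 hx.2)

theorem summable_genFun_term (hP : ∀ n, 0 ≤ P n) (hS : Summable P) {x : ℝ}
    (hx : x ∈ Icc (0 : ℝ) 1) : Summable fun n => P n * x ^ n :=
  hS.of_norm_bounded (norm_genFun_term_le hP hx)

theorem continuousOn_genFun (hP : ∀ n, 0 ≤ P n) (hS : Summable P) :
    ContinuousOn (genFun P) (Icc 0 1) :=
  continuousOn_tsum (fun n => by fun_prop) hS fun n _ hx => norm_genFun_term_le hP hx n

theorem convexOn_genFun (hP : ∀ n, 0 ≤ P n) (hS : Summable P) :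
    ConvexOn ℝ (Icc 0 1) (genFun P) :=
  ConvexOn.tsum
    (fun n => ((convexOn_pow n).subset Icc_subset_Ici_self (convex_Icc 0 1)).smul (hP n))
    (convex_Icc 0 1) fun _ hx => summable_genFun_term hP hS hx

theorem continuousOn_genFun_one_sub_mul (hP : ∀ n, 0 ≤ P n) (hS : Summable P) {q : ℝ}
    (hq : q ∈ Icc (0 : ℝ) 1) : ContinuousOn (fun h => genFun P (1 - q * h)) (Icc 0 1) :=
  (continuousOn_genFun hP hS).comp (by fun_prop) fun _ hh => one_sub_mul_mem_Icc hq hh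

theorem convexOn_genFun_one_sub_mul (hP : ∀ n, 0 ≤ P n) (hS : Summable P) {q : ℝ}
    (hq : q ∈ Icc (0 : ℝ) 1) : ConvexOn ℝ (Icc 0 1) (fun h => genFun P (1 - q * h)) := by
  have hline : ∀ h : ℝ, AffineMap.lineMap (1 : ℝ) (1 - q) h = 1 - q * h := fun h => by
    rw [AffineMap.lineMap_apply_ring']
    ring
  refine (((convexOn_genFun hP hS).comp_affineMap (AffineMap.lineMap 1 (1 - q))).subset
    (fun h hh => ?_) (convex_Icc 0 1)).congr fun h _ => ?_
  · simpa [mem_preimage, hline] using one_sub_mul_mem_Icc hq hh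
  · simp only [Function.comp_apply, hline]

end genFun

/-- There exists a unique `h ∈ [0,1]` satisfying the fixed point equation
`h = f(h, γ) = 1 − γ(1 − p⁻)·G(1 − q⁻·h) − (1 − γ)(1 − p⁺)·G(1 − q⁺·h)`,
where `G(x) = ∑ₙ P(n)·xⁿ` is the generating function of a probability mass function `P` on `ℕ`,
the parameters `p⁻, p⁺, q⁻, q⁺, γ` lie in `[0,1]`, and `γ·p⁻ + (1 − γ)·p⁺ > 0`. -/
theorem stmt_0 (P : ℕ → ℝ) (hP : ∀ n, 0 ≤ P n) (hPsum : ∑' n, P n = 1)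
    (pm pp qm qp γ : ℝ)
    (hpm : pm ∈ Icc (0:ℝ) 1) (hpp : pp ∈ Icc (0:ℝ) 1)
    (hqm : qm ∈ Icc (0:ℝ) 1) (hqp : qp ∈ Icc (0:ℝ) 1)
    (hγ : γ ∈ Icc (0:ℝ) 1)
    (hpos : 0 < γ * pm + (1 - γ) * pp) :
    ∃! h : ℝ, h ∈ Icc (0:ℝ) 1 ∧
      h = 1 - γ * (1 - pm) * (∑' n, P n * (1 - qm * h) ^ n)
            - (1 - γ) * (1 - pp) * (∑' n, P n * (1 - qp * h) ^ n) := by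
  have hS : Summable P := by
    by_contra h
    simp [tsum_eq_zero_of_not_summable h] at hPsum
  have hcm : 0 ≤ γ * (1 - pm) := mul_nonneg hγ.1 (sub_nonneg.mpr hpm.2)
  have hcp : 0 ≤ (1 - γ) * (1 - pp) := mul_nonneg (sub_nonneg.mpr hγ.2) (sub_nonneg.mpr hpp.2)
  have hGm := continuousOn_genFun_one_sub_mul hP hS hqm
  have hGp := continuousOn_genFun_one_sub_mul hP hS hqp
  refine existsUnique_eq_of_concaveOn (f := fun h =>
      1 - γ * (1 - pm) * genFun P (1 - qm * h) - (1 - γ) * (1 - pp) * genFun P (1 - qp * h))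
    zero_le_one ?_ ?_ ?_ ?_
  · exact (continuousOn_const.sub (continuousOn_const.mul hGm)).sub (continuousOn_const.mul hGp)
  · exact ((concaveOn_const 1 (convex_Icc 0 1)).sub
      ((convexOn_genFun_one_sub_mul hP hS hqm).smul hcm)).sub
      ((convexOn_genFun_one_sub_mul hP hS hqp).smul hcp)
  · simp only [mul_zero, sub_zero, genFun_one, hPsum]
    linarith
  · have hm := mul_nonneg hcm (genFun_nonneg hP (one_sub_mul_mem_Icc hqm ⟨zero_le_one, le_rfl⟩).1)
    have hp := mul_nonneg hcp (genFun_nonneg hP (one_sub_mul_mem_Icc hqp ⟨zero_le_one, le_rfl⟩).1)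
    linarith
end

section
/- The fixed point is nonincreasing in γ: if 0 ≤ u ≤ v ≤ 1, with u·p⁻ + (1 − u)·p⁺ > 0 and v·p⁻ + (1 − v)·p⁺ > 0, and h(u), h(v) ∈ [0,1] denote the unique solutions of h(u) = f(h(u), u) and h(v) = f(h(v), v), then h(v) ≤ h(u). -/
open Set

private lemma sumP {P : ℕ → ℝ} (hPsum : ∑' n, P n = 1) : Summable P := by
  by_contra h
  rw [tsum_eq_zero_of_not_summable h] at hPsum
  norm_num at hPsum

private lemma sumG {P : ℕ → ℝ} (hP : ∀ n, 0 ≤ P n) (hPsum : ∑' n, P n = 1)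
    {y : ℝ} (hy0 : 0 ≤ y) (hy1 : y ≤ 1) : Summable (fun n => P n * y ^ n) := by
  refine (sumP hPsum).of_nonneg_of_le
    (fun n => mul_nonneg (hP n) (pow_nonneg hy0 n)) (fun n => ?_)
  have : y ^ n ≤ 1 := pow_le_one₀ hy0 hy1
  nlinarith [hP n]

private lemma G_nonneg {P : ℕ → ℝ} (hP : ∀ n, 0 ≤ P n)
    {y : ℝ} (hy0 : 0 ≤ y) : 0 ≤ ∑' n, P n * y ^ n :=
  tsum_nonneg (fun n => mul_nonneg (hP n) (pow_nonneg hy0 n))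

private lemma G_mono {P : ℕ → ℝ} (hP : ∀ n, 0 ≤ P n) (hPsum : ∑' n, P n = 1)
    {y z : ℝ} (hy0 : 0 ≤ y) (hyz : y ≤ z) (hz1 : z ≤ 1) :
    (∑' n, P n * y ^ n) ≤ ∑' n, P n * z ^ n := by
  refine Summable.tsum_le_tsum (fun n => ?_) (sumG hP hPsum hy0 (hyz.trans hz1))
    (sumG hP hPsum (hy0.trans hyz) hz1)
  exact mul_le_mul_of_nonneg_left (pow_le_pow_left₀ hy0 hyz n) (hP n)

private lemma G_conv {P : ℕ → ℝ} (hP : ∀ n, 0 ≤ P n) (hPsum : ∑' n, P n = 1)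
    {y s : ℝ} (hy0 : 0 ≤ y) (hy1 : y ≤ 1) (hs0 : 0 ≤ s) (hs1 : s ≤ 1) :
    (∑' n, P n * (s * y + (1 - s)) ^ n) ≤ s * (∑' n, P n * y ^ n) + (1 - s) := by
  have hcomb0 : 0 ≤ s * y + (1 - s) := by nlinarith
  have hcomb1 : s * y + (1 - s) ≤ 1 := by nlinarith
  have h1 : Summable (fun n => s * (P n * y ^ n)) :=
    (sumG hP hPsum hy0 hy1).mul_left s
  have h2 : Summable (fun n => (1 - s) * P n) := (sumP hPsum).mul_left (1 - s)
  have key : ∀ n, P n * (s * y + (1 - s)) ^ n ≤ s * (P n * y ^ n) + (1 - s) * P n := by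
    intro n
    have hc : (s * y + (1 - s) * 1) ^ n ≤ s * y ^ n + (1 - s) * 1 ^ n := by
      have := (convexOn_pow n).2 (mem_Ici.mpr hy0) (mem_Ici.mpr zero_le_one)
        hs0 (by linarith : (0:ℝ) ≤ 1 - s) (by ring : s + (1 - s) = 1)
      simpa using this
    simp only [one_pow, mul_one] at hc
    nlinarith [mul_le_mul_of_nonneg_left hc (hP n)]
  calc (∑' n, P n * (s * y + (1 - s)) ^ n)
      ≤ ∑' n, (s * (P n * y ^ n) + (1 - s) * P n) :=
        Summable.tsum_le_tsum key (sumG hP hPsum hcomb0 hcomb1) (h1.add h2)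
    _ = s * (∑' n, P n * y ^ n) + (1 - s) := by
        rw [Summable.tsum_add h1 h2, tsum_mul_left, tsum_mul_left, hPsum, mul_one]

/-- The fixed point of `h = f(h, γ)` is nonincreasing in `γ`:
if `0 ≤ u ≤ v ≤ 1`, with `u·p⁻ + (1 − u)·p⁺ > 0` and `v·p⁻ + (1 − v)·p⁺ > 0`, and
`hu, hv ∈ [0,1]` are the (unique) solutions of the fixed point equations at `u` and `v`
respectively, then `hv ≤ hu`.  Here `f(x, γ) = 1 − γ(1 − p⁻)·G(1 − q⁻·x) − (1 − γ)(1 − p⁺)·G(1 − q⁺·x)`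
with `G` the generating function of a probability mass function `P` on `ℕ`, and
`p⁻ ≤ p⁺`, `q⁻ ≤ q⁺` all in `[0,1]`. -/
theorem stmt_1 (P : ℕ → ℝ) (hP : ∀ n, 0 ≤ P n) (hPsum : ∑' n, P n = 1)
    (pm pp qm qp : ℝ)
    (hpm : pm ∈ Icc (0:ℝ) 1) (hpp : pp ∈ Icc (0:ℝ) 1)
    (hqm : qm ∈ Icc (0:ℝ) 1) (hqp : qp ∈ Icc (0:ℝ) 1)
    (hpmpp : pm ≤ pp) (hqmqp : qm ≤ qp)
    (u v : ℝ) (hu0 : 0 ≤ u) (huv : u ≤ v) (hv1 : v ≤ 1)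
    (hposu : 0 < u * pm + (1 - u) * pp) (hposv : 0 < v * pm + (1 - v) * pp)
    (hu hv : ℝ)
    (hhu : hu ∈ Icc (0:ℝ) 1 ∧
      hu = 1 - u * (1 - pm) * (∑' n, P n * (1 - qm * hu) ^ n)
            - (1 - u) * (1 - pp) * (∑' n, P n * (1 - qp * hu) ^ n))
    (hhv : hv ∈ Icc (0:ℝ) 1 ∧
      hv = 1 - v * (1 - pm) * (∑' n, P n * (1 - qm * hv) ^ n)
            - (1 - v) * (1 - pp) * (∑' n, P n * (1 - qp * hv) ^ n)) :
    hv ≤ hu := by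
  obtain ⟨⟨hu0', hu1'⟩, hue⟩ := hhu
  obtain ⟨⟨hv0', hv1'⟩, hve⟩ := hhv
  by_contra hlt
  push_neg at hlt
  have hu1 : u ≤ 1 := huv.trans hv1
  have hvpos : 0 < hv := lt_of_le_of_lt hu0' hlt
  set s : ℝ := hu / hv with hs_def
  have hs0 : 0 ≤ s := div_nonneg hu0' hvpos.le
  have hs1 : s < 1 := (div_lt_one hvpos).mpr hlt
  have hsv : s * hv = hu := div_mul_cancel₀ hu hvpos.ne'
  have hA0 : 0 ≤ 1 - qm * hv := by nlinarith [hqm.1, hqm.2, hqmqp]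
  have hB0 : 0 ≤ 1 - qp * hv := by nlinarith [hqp.2]
  have hA1 : 1 - qm * hv ≤ 1 := by nlinarith [hqm.1]
  have hB1 : 1 - qp * hv ≤ 1 := by nlinarith [hqp.1, hqm.1, hqmqp]
  set A : ℝ := ∑' n, P n * (1 - qm * hv) ^ n with hA_def
  set B : ℝ := ∑' n, P n * (1 - qp * hv) ^ n with hB_def
  have hAnn : 0 ≤ A := G_nonneg hP hA0
  have hBnn : 0 ≤ B := G_nonneg hP hB0
  have hBA : B ≤ A := G_mono hP hPsum hB0 (by nlinarith) hA1
  -- step 1: hv ≤ F(hv, u)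
  have hmono : (1 - pp) * B ≤ (1 - pm) * A :=
    mul_le_mul (by linarith) hBA hBnn (by linarith [hpm.2])
  have step1 : hv ≤ 1 - u * (1 - pm) * A - (1 - u) * (1 - pp) * B := by
    nlinarith [hve, hmono, sub_nonneg.mpr huv]
  -- step 2: concavity at the equation for u
  have e1 : 1 - qm * hu = s * (1 - qm * hv) + (1 - s) := by rw [← hsv]; ring
  have e2 : 1 - qp * hu = s * (1 - qp * hv) + (1 - s) := by rw [← hsv]; ring
  have c1 : (∑' n, P n * (1 - qm * hu) ^ n) ≤ s * A + (1 - s) := by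
    rw [e1]; exact G_conv hP hPsum hA0 hA1 hs0 hs1.le
  have c2 : (∑' n, P n * (1 - qp * hu) ^ n) ≤ s * B + (1 - s) := by
    rw [e2]; exact G_conv hP hPsum hB0 hB1 hs0 hs1.le
  have coeff1 : 0 ≤ u * (1 - pm) := mul_nonneg hu0 (by linarith [hpm.2])
  have coeff2 : 0 ≤ (1 - u) * (1 - pp) := mul_nonneg (by linarith) (by linarith [hpp.2])
  have step2 : 1 - u * (1 - pm) * (s * A + (1 - s))
      - (1 - u) * (1 - pp) * (s * B + (1 - s)) ≤ hu := by
    have m1 := mul_le_mul_of_nonneg_left c1 coeff1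
    have m2 := mul_le_mul_of_nonneg_left c2 coeff2
    rw [hue]
    rw [mul_assoc, mul_assoc] at m1 m2 ⊢
    linarith
  have hexp : 1 - u * (1 - pm) * (s * A + (1 - s))
      - (1 - u) * (1 - pp) * (s * B + (1 - s))
      = s * (1 - u * (1 - pm) * A - (1 - u) * (1 - pp) * B)
        + (1 - s) * (u * pm + (1 - u) * pp) := by ring
  rw [hexp] at step2
  have m3 := mul_le_mul_of_nonneg_left step1 hs0
  have m4 := mul_pos (sub_pos.mpr hs1) hposu
  rw [hsv] at m3
  linarith
end

section
/- There exists a unique h ∈ [0,1] satisfying h = 1 − γ(1 − p⁻)·exp(−λ·q⁻·h) − (1 − γ)(1 − p⁺)·exp(−λ·q⁺·h). -/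
open Set

lemma exp_neg_convex (b : ℝ) : ConvexOn ℝ univ (fun h : ℝ => Real.exp (-(b * h))) := by
  refine ⟨convex_univ, fun x _ y _ α β hα hβ hαβ => ?_⟩
  have h1 : -(b * (α • x + β • y)) = α • (-(b * x)) + β • (-(b * y)) := by
    simp [smul_eq_mul]; ring
  show Real.exp (-(b * (α • x + β • y))) ≤ α • Real.exp (-(b * x)) + β • Real.exp (-(b * y))
  rw [h1]
  exact convexOn_exp.2 (mem_univ _) (mem_univ _) hα hβ hαβ

/-- There exists a unique `h ∈ [0,1]` satisfying
`h = 1 − γ(1 − p⁻)·exp(−λ·q⁻·h) − (1 − γ)(1 − p⁺)·exp(−λ·q⁺·h)`,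
where `λ > 0`, `p⁻, p⁺, q⁻, q⁺, γ ∈ [0,1]` and `γ·p⁻ + (1 − γ)·p⁺ > 0`
(the local mean field fixed point equation for an Erdős–Rényi random graph `G(n, λ/n)`). -/
theorem stmt_7 (lam pm pp qm qp γ : ℝ) (hlam : 0 < lam)
    (hpm : pm ∈ Icc (0:ℝ) 1) (hpp : pp ∈ Icc (0:ℝ) 1)
    (hqm : qm ∈ Icc (0:ℝ) 1) (hqp : qp ∈ Icc (0:ℝ) 1)
    (hγ : γ ∈ Icc (0:ℝ) 1)
    (hpos : 0 < γ * pm + (1 - γ) * pp) :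
    ∃! h : ℝ, h ∈ Icc (0:ℝ) 1 ∧
      h = 1 - γ * (1 - pm) * Real.exp (-(lam * qm * h))
            - (1 - γ) * (1 - pp) * Real.exp (-(lam * qp * h)) := by
  set a := γ * (1 - pm) with ha_def
  set c := (1 - γ) * (1 - pp) with hc_def
  have ha : 0 ≤ a := mul_nonneg hγ.1 (by linarith [hpm.2])
  have hc : 0 ≤ c := mul_nonneg (by linarith [hγ.2]) (by linarith [hpp.2])
  have hac : a + c < 1 := by
    have : a + c = 1 - (γ * pm + (1 - γ) * pp) := by ring
    linarith
  set g : ℝ → ℝ := fun h => h - 1 + a * Real.exp (-(lam * qm * h))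
      + c * Real.exp (-(lam * qp * h)) with hg_def
  have hgconv : ConvexOn ℝ univ g := by
    have h1 : ConvexOn ℝ univ (fun h : ℝ => h - 1) :=
      ⟨convex_univ, fun x _ y _ α β hα hβ hαβ => by simp [smul_eq_mul]; nlinarith⟩
    have h2 := (exp_neg_convex (lam * qm)).smul ha
    have h3 := (exp_neg_convex (lam * qp)).smul hc
    have hsum := (h1.add h2).add h3
    have heq : g = ((fun h : ℝ => h - 1) + (fun h : ℝ => a • Real.exp (-(lam * qm * h)))
        + (fun h : ℝ => c • Real.exp (-(lam * qp * h)))) := by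
      funext x
      simp [g, smul_eq_mul]
    rw [heq]
    exact hsum
  have hg0 : g 0 < 0 := by simp [g]; linarith
  have hg1 : 0 ≤ g 1 := by
    have e1 : (0:ℝ) < Real.exp (-(lam * qm * 1)) := Real.exp_pos _
    have e2 : (0:ℝ) < Real.exp (-(lam * qp * 1)) := Real.exp_pos _
    have : g 1 = a * Real.exp (-(lam * qm * 1)) + c * Real.exp (-(lam * qp * 1)) := by
      simp [g]
    nlinarith
  have hcont : ContinuousOn g (Icc 0 1) := by
    apply Continuous.continuousOn
    continuity
  -- existence via IVT
  obtain ⟨h, hhmem, hgh⟩ : ∃ h ∈ Icc (0:ℝ) 1, g h = 0 := by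
    have := intermediate_value_Icc (by norm_num : (0:ℝ) ≤ 1) hcont
    have h0 : (0:ℝ) ∈ Icc (g 0) (g 1) := ⟨le_of_lt hg0, hg1⟩
    obtain ⟨h, hmem, heq⟩ := this h0
    exact ⟨h, hmem, heq⟩
  -- uniqueness of zeros of g in [0,1]
  have huniq : ∀ x y : ℝ, x ∈ Icc (0:ℝ) 1 → y ∈ Icc (0:ℝ) 1 → g x = 0 → g y = 0 → x = y := by
    have key : ∀ x y : ℝ, x ∈ Icc (0:ℝ) 1 → y ∈ Icc (0:ℝ) 1 → g x = 0 → g y = 0 →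
        x < y → False := by
      intro x y hx hy hgx hgy hxy
      have hxpos : 0 < x := by
        rcases lt_or_eq_of_le hx.1 with h | h
        · exact h
        · rw [← h] at hgx; linarith
      have hypos : 0 < y := lt_trans hxpos hxy
      set t := x / y with ht_def
      have ht0 : 0 < t := div_pos hxpos hypos
      have ht1 : t < 1 := (div_lt_one hypos).mpr hxy
      have hcomb := hgconv.2 (mem_univ (0:ℝ)) (mem_univ y)
        (by linarith : (0:ℝ) ≤ 1 - t) (le_of_lt ht0) (by ring)
      have hxy' : (1 - t) • (0:ℝ) + t • y = x := by
        simp [smul_eq_mul, ht_def]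
        exact div_mul_cancel₀ x hypos.ne'
      rw [hxy'] at hcomb
      have : (1 - t) • g 0 + t • g y < 0 := by
        simp [smul_eq_mul, hgy]
        nlinarith
      linarith [hcomb, this, hgx.ge, hgx.le]
    intro x y hx hy hgx hgy
    rcases lt_trichotomy x y with h | h | h
    · exact absurd (key x y hx hy hgx hgy h) (by simp)
    · exact h
    · exact absurd (key y x hy hx hgy hgx h) (by simp)
  have hiff : ∀ x : ℝ, (x = 1 - a * Real.exp (-(lam * qm * x))
      - c * Real.exp (-(lam * qp * x))) ↔ g x = 0 := by
    intro x; constructor <;> intro hx <;> simp [g] at * <;> linarith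
  refine ⟨h, ⟨hhmem, ?_⟩, ?_⟩
  · rw [hiff]; exact hgh
  · rintro y ⟨hymem, hyeq⟩
    rw [hiff] at hyeq
    exact huniq y h hymem hhmem hyeq hgh
end

section
/- For each γ ∈ [0,1] there is a unique solution h(γ) ∈ [0,1] of h = (1 − γ)·(1 − (1 − p⁺)·exp(−λ·q⁺·h)). Moreover, if c and ℓ are reals with ℓ > 0 and p⁺·ℓ < c ≤ h(0)·ℓ, then there exists a unique γ* ∈ [0,1) such that h(γ*)·ℓ = (1 − γ*)·c; equivalently, γ* is the unique point with 1 − γ* = h(γ*)·ℓ/c and h(γ*) = (h(γ*)·ℓ/c)·(1 − (1 − p⁺)·exp(−λ·q⁺·h(γ*))). -/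
open Set

/-!
Write `F x = 1 - (1 - p⁺) e^{-λ q⁺ x}`, so that `h(γ)` is a fixed point of `x ↦ (1 - γ) F x`.
Since `F` is concave with `F 0 = p⁺ > 0`, the ratio `F x / x` is strictly decreasing on `(0, ∞)`,
so `x = b F x`, i.e. `F x / x = 1 / b`, has at most one positive solution; existence is the
intermediate value theorem.

For `γ < 1` the equation `h(γ) ℓ = (1 - γ) c` is equivalent to `F (h γ) = c / ℓ`. As `F` is
injective this pins down `h(γ*)` as the unique `s` with `F s = c / ℓ`, which lies in `(0, h(0)]`
because `p⁺ < c / ℓ ≤ h(0) = F (h 0)`, and then `γ* = 1 - s ℓ / c`. The condition `γ* ≥ 0`, i.e.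
`s ≤ F s`, follows from `F s / s ≥ F (h 0) / h 0 = 1`.
-/

section FixedPoint

variable {F : ℝ → ℝ}

theorem ConcaveOn.strictAntiOn_div_self (hF : ConcaveOn ℝ (Ici 0) F) (h0 : 0 < F 0) :
    StrictAntiOn (fun x => F x / x) (Ioi 0) := by
  intro x hx y hy hxy
  rw [mem_Ioi] at hx hy
  rw [div_lt_div_iff₀ hy hx]
  -- concavity along the chord from `0` to `y`, evaluated at `x`
  have hconc := hF.2 (mem_Ici.2 hy.le) self_mem_Ici (div_nonneg hx.le hy.le)
    (sub_nonneg.2 ((div_le_one hy).2 hxy.le)) (add_sub_cancel _ _)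
  simp only [smul_eq_mul, mul_zero, add_zero, div_mul_cancel₀ x hy.ne'] at hconc
  have hy_mul : y * (x / y * F y + (1 - x / y) * F 0) = F y * x + (y - x) * F 0 := by
    field_simp
  nlinarith [mul_le_mul_of_nonneg_left hconc hy.le, mul_pos (sub_pos.2 hxy) h0]

theorem ConcaveOn.eq_of_eq_mul (hF : ConcaveOn ℝ (Ici 0) F) (h0 : 0 < F 0) {b x y : ℝ}
    (hb : 0 < b) (hx : 0 ≤ x) (hy : 0 ≤ y) (hxb : x = b * F x) (hyb : y = b * F y) :
    x = y := by
  have pos_of_eq : ∀ z, 0 ≤ z → z = b * F z → 0 < z := by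
    intro z hz hzb
    rcases hz.eq_or_lt with rfl | hz
    · exact absurd hzb (mul_pos hb h0).ne
    · exact hz
  have ratio : ∀ z, 0 ≤ z → z = b * F z → F z / z = b⁻¹ := by
    intro z hz hzb
    rw [div_eq_iff (pos_of_eq z hz hzb).ne']
    nth_rewrite 2 [hzb]
    field_simp
  exact (hF.strictAntiOn_div_self h0).injOn (pos_of_eq x hx hxb) (pos_of_eq y hy hyb)
    ((ratio x hx hxb).trans (ratio y hy hyb).symm)

theorem ConcaveOn.existsUnique_eq_mul (hF : ConcaveOn ℝ (Ici 0) F) (hFc : Continuous F)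
    (h0 : 0 < F 0) (h1 : F 1 ≤ 1) {b : ℝ} (hb : b ∈ Icc (0 : ℝ) 1) :
    ∃! x, x ∈ Icc (0 : ℝ) 1 ∧ x = b * F x := by
  obtain ⟨hb0, hb1⟩ := hb
  have hbF1 : b * F 1 ≤ 1 := by
    rcases le_total 0 (F 1) with hF1 | hF1 <;> nlinarith
  obtain ⟨x, hx, hfx⟩ : (0 : ℝ) ∈ (fun x => x - b * F x) '' Icc 0 1 :=
    intermediate_value_Icc zero_le_one (by fun_prop) ⟨by nlinarith, by linarith⟩
  refine ⟨x, ⟨hx, sub_eq_zero.1 hfx⟩, ?_⟩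
  rintro y ⟨hy, hyb⟩
  rcases hb0.eq_or_lt with rfl | hb0
  · rw [hyb, sub_eq_zero.1 hfx, zero_mul, zero_mul]
  · exact hF.eq_of_eq_mul h0 hb0 hy.1 hx.1 hyb (sub_eq_zero.1 hfx)

theorem ConcaveOn.exists_pos_apply_mul_eq (hF : ConcaveOn ℝ (Ici 0) F) (hFc : Continuous F)
    (h0 : 0 < F 0) {x₀ : ℝ} (hx₀ : 0 ≤ x₀) (hFx₀ : x₀ = F x₀) {c ℓ : ℝ} (hℓ : 0 < ℓ)
    (hc0 : F 0 * ℓ < c) (hcx₀ : c ≤ x₀ * ℓ) :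
    ∃ s, 0 < s ∧ s * ℓ ≤ c ∧ F s * ℓ = c := by
  have hcℓ : c / ℓ ∈ Icc (F 0) (F x₀) := by
    rw [← hFx₀, mem_Icc, le_div_iff₀ hℓ, div_le_iff₀ hℓ]
    exact ⟨hc0.le, hcx₀⟩
  obtain ⟨s, ⟨hs0, hsx₀⟩, hFs⟩ := intermediate_value_Icc hx₀ hFc.continuousOn hcℓ
  rw [eq_div_iff hℓ.ne'] at hFs
  have hs : 0 < s := by
    rcases hs0.eq_or_lt with rfl | hs
    · exact absurd hFs hc0.ne
    · exact hs
  have hs_le_Fs : s ≤ F s := by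
    rcases hsx₀.eq_or_lt with rfl | hsx₀
    · exact hFx₀.le
    · have := hF.strictAntiOn_div_self h0 hs (hs.trans hsx₀) hsx₀
      dsimp only at this
      rw [← hFx₀, div_self (hs.trans hsx₀).ne', lt_div_iff₀ hs, one_mul] at this
      exact this.le
  exact ⟨s, hs, hFs ▸ mul_le_mul_of_nonneg_right hs_le_Fs hℓ.le, hFs⟩

theorem ConcaveOn.existsUnique_mul_eq_sub_mul (hF : ConcaveOn ℝ (Ici 0) F)
    (hFc : Continuous F) (hFinj : InjOn F (Ici 0)) (h0 : 0 < F 0) {h : ℝ → ℝ}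
    (hh : ∀ γ ∈ Icc (0 : ℝ) 1, 0 ≤ h γ ∧ h γ = (1 - γ) * F (h γ)) {c ℓ : ℝ} (hℓ : 0 < ℓ)
    (hc0 : F 0 * ℓ < c) (hch : c ≤ h 0 * ℓ) :
    ∃! γ, γ ∈ Ico (0 : ℝ) 1 ∧ h γ * ℓ = (1 - γ) * c := by
  obtain ⟨hh0, hFh0⟩ := hh 0 (left_mem_Icc.2 zero_le_one)
  rw [sub_zero, one_mul] at hFh0
  obtain ⟨s, hs, hsc, hFs⟩ := hF.exists_pos_apply_mul_eq hFc h0 hh0 hFh0 hℓ hc0 hch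
  have hc : 0 < c := (mul_pos h0 hℓ).trans hc0
  have hγ₀ : 1 - (1 - s * ℓ / c) = s * ℓ / c := sub_sub_cancel _ _
  have hγ₀_mem : 1 - s * ℓ / c ∈ Ico (0 : ℝ) 1 :=
    ⟨sub_nonneg.2 ((div_le_one hc).2 hsc), sub_lt_self _ (by positivity)⟩
  obtain ⟨hhγ₀_nonneg, hhγ₀⟩ := hh _ (Ico_subset_Icc_self hγ₀_mem)
  have hhγ₀_eq : h (1 - s * ℓ / c) = s := by
    refine hF.eq_of_eq_mul h0 (by positivity) hhγ₀_nonneg hs.le (hγ₀ ▸ hhγ₀) ?_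
    rw [div_mul_eq_mul_div, eq_div_iff hc.ne', ← hFs]
    ring
  refine ⟨1 - s * ℓ / c, ⟨hγ₀_mem, ?_⟩, ?_⟩
  · rw [hhγ₀_eq, hγ₀, div_mul_cancel₀ _ hc.ne']
  · rintro γ ⟨hγ, hγc⟩
    obtain ⟨hhγ_nonneg, hhγ⟩ := hh γ (Ico_subset_Icc_self hγ)
    have hFhγ : F (h γ) * ℓ = c := by
      have hγ1 : 0 < 1 - γ := sub_pos.2 hγ.2
      rw [hhγ, mul_assoc] at hγc
      exact mul_left_cancel₀ hγ1.ne' hγc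
    have hhγ_eq : h γ = s :=
      hFinj hhγ_nonneg hs.le (mul_right_cancel₀ hℓ.ne' (hFhγ.trans hFs.symm))
    rw [hhγ_eq] at hγc
    field_simp
    linarith

end FixedPoint

noncomputable def infectionProb (p a x : ℝ) : ℝ := 1 - (1 - p) * Real.exp (-(a * x))

section InfectionProb

variable {p a : ℝ}

theorem infectionProb_zero : infectionProb p a 0 = p := by
  simp [infectionProb]

theorem continuous_infectionProb : Continuous (infectionProb p a) := by
  unfold infectionProb
  fun_prop

theorem infectionProb_le_one (hp : p ≤ 1) (x : ℝ) : infectionProb p a x ≤ 1 := by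
  unfold infectionProb
  nlinarith [Real.exp_pos (-(a * x))]

theorem concaveOn_infectionProb (hp : p ≤ 1) : ConcaveOn ℝ univ (infectionProb p a) := by
  have hexp : ConvexOn ℝ univ fun x : ℝ => Real.exp (-(a * x)) := by
    simpa [Function.comp_def, neg_mul] using convexOn_exp.comp_linearMap (LinearMap.mulLeft ℝ (-a))
  refine (((hexp.smul (sub_nonneg.2 hp)).neg).add_const 1).congr fun x _ => ?_
  simp only [infectionProb, Pi.add_apply, Pi.neg_apply, smul_eq_mul]
  ring

theorem strictMono_infectionProb (hp : p < 1) (ha : 0 < a) : StrictMono (infectionProb p a) := by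
  intro x y hxy
  have : Real.exp (-(a * y)) < Real.exp (-(a * x)) := Real.exp_lt_exp.2 (by nlinarith)
  unfold infectionProb
  nlinarith

end InfectionProb

/-- Strong protection model on an Erdős–Rényi graph (`λ > 0`, `q⁺ ∈ (0,1]`,
`p⁺ ∈ (0,1)`, `p⁻ = q⁻ = 0`).  For each `γ ∈ [0,1]` there is a unique solution `h(γ) ∈ [0,1]` of
`h = (1 − γ)·(1 − (1 − p⁺)·exp(−λ·q⁺·h))`.  Moreover, if `ℓ > 0` and `p⁺·ℓ < c ≤ h(0)·ℓ`,
then there exists a unique `γ* ∈ [0,1)` such that `h(γ*)·ℓ = (1 − γ*)·c`. -/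
theorem stmt_8 (lam qp pp : ℝ) (hlam : 0 < lam) (hqp : qp ∈ Ioc (0:ℝ) 1)
    (hpp : pp ∈ Ioo (0:ℝ) 1) :
    (∀ γ ∈ Icc (0:ℝ) 1, ∃! h : ℝ, h ∈ Icc (0:ℝ) 1 ∧
        h = (1 - γ) * (1 - (1 - pp) * Real.exp (-(lam * qp * h)))) ∧
    ∀ h : ℝ → ℝ,
      (∀ γ ∈ Icc (0:ℝ) 1, h γ ∈ Icc (0:ℝ) 1 ∧
        h γ = (1 - γ) * (1 - (1 - pp) * Real.exp (-(lam * qp * h γ)))) →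
      ∀ c ℓ : ℝ, 0 < ℓ → pp * ℓ < c → c ≤ h 0 * ℓ →
        ∃! γstar : ℝ, γstar ∈ Ico (0:ℝ) 1 ∧ h γstar * ℓ = (1 - γstar) * c := by
  have hF := (concaveOn_infectionProb (a := lam * qp) hpp.2.le).subset (subset_univ _)
    (convex_Ici 0)
  have hF0 : 0 < infectionProb pp (lam * qp) 0 := infectionProb_zero.symm ▸ hpp.1
  refine ⟨fun γ hγ => hF.existsUnique_eq_mul continuous_infectionProb hF0
    (infectionProb_le_one hpp.2.le 1) ⟨sub_nonneg.2 hγ.2, sub_le_self _ hγ.1⟩, ?_⟩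
  intro h hh c ℓ hℓ hc0 hch
  exact hF.existsUnique_mul_eq_sub_mul continuous_infectionProb
    ((strictMono_infectionProb hpp.2 (mul_pos hlam hqp.1)).injective.injOn)
    hF0 (fun γ hγ => ⟨(hh γ hγ).1.1, (hh γ hγ).2⟩) hℓ (infectionProb_zero.symm ▸ hc0) hch
end

section
/- In the strong protection model, the map γ ↦ 1 − (1 − p⁺)·exp(−λ·q⁺·h(γ)) is nonincreasing on [0,1]; equivalently, for γ ∈ [0,1) the ratio h(γ)/(1 − γ) is nonincreasing in γ. (This ratio equals the loss probability p^{N,γ} of an unprotected agent, so the incentive threshold c^γ = p^{N,γ}·ℓ for investing in self-protection is nonincreasing in the fraction γ of protected agents.) -/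
/-!
Put `F x = 1 - (1 - p⁺) exp (-λ q⁺ x)`, so that the fixed-point equation reads
`h γ / F (h γ) = 1 - γ`. As `F` is concave with `F 0 = p⁺ > 0`, the map `x ↦ x / F x` is strictly
increasing on `[0, ∞)`, hence `h` is nonincreasing, and so is `F ∘ h` because `F` is increasing.
For `γ < 1` the ratio `h γ / (1 - γ)` is `F (h γ)` itself.
-/

open Set

/-- Concavity compares `F x` with the chord from `(0, F 0)` to `(y, F y)`, which lies strictly
above the ray through the origin because `F 0 > 0`. -/
theorem ConcaveOn.mul_lt_mul_of_pos_of_lt {F : ℝ → ℝ} (hF : ConcaveOn ℝ (Ici 0) F)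
    (hF0 : 0 < F 0) {x y : ℝ} (hx : 0 ≤ x) (hxy : x < y) : x * F y < y * F x := by
  have hy : 0 < y := hx.trans_lt hxy
  have hchord : x / y * F y + (y - x) / y * F 0 ≤ F x := by
    have := hF.2 (mem_Ici.2 hy.le) (mem_Ici.2 le_rfl) (div_nonneg hx hy.le)
      (div_nonneg (sub_nonneg.2 hxy.le) hy.le) (by field_simp; ring)
    rwa [smul_eq_mul, smul_eq_mul, smul_eq_mul, smul_zero, add_zero,
      div_mul_cancel₀ x hy.ne'] at this
  have hscaled : x * F y + (y - x) * F 0 ≤ y * F x :=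
    calc x * F y + (y - x) * F 0 = y * (x / y * F y + (y - x) / y * F 0) := by field_simp
      _ ≤ y * F x := mul_le_mul_of_nonneg_left hchord hy.le
  nlinarith [mul_pos (sub_pos.2 hxy) hF0]

theorem ConcaveOn.strictMonoOn_div {F : ℝ → ℝ} (hF : ConcaveOn ℝ (Ici 0) F)
    (hpos : ∀ x ∈ Ici (0 : ℝ), 0 < F x) : StrictMonoOn (fun x => x / F x) (Ici 0) :=
  fun x hx y hy hxy => (div_lt_div_iff₀ (hpos x hx) (hpos y hy)).2 <|
    hF.mul_lt_mul_of_pos_of_lt (hpos 0 self_mem_Ici) hx hxy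

theorem StrictMonoOn.antitoneOn_of_antitoneOn_comp {α β δ : Type*} [LinearOrder α] [Preorder β]
    [Preorder δ] {g : α → β} {h : δ → α} {S : Set α} {T : Set δ} (hg : StrictMonoOn g S)
    (hh : MapsTo h T S) (hgh : AntitoneOn (g ∘ h) T) : AntitoneOn h T :=
  fun _ hu _ hv huv => (hg.le_iff_le (hh hv) (hh hu)).1 (hgh hu hv huv)

section LossProbability

variable {a b : ℝ}

theorem concaveOn_one_sub_mul_exp_neg_mul (hb : 0 ≤ b) :
    ConcaveOn ℝ univ (fun x => 1 - b * Real.exp (-(a * x))) := by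
  have hconv : ConvexOn ℝ univ (fun x => Real.exp (-(a * x))) := by
    simpa [Function.comp_def] using convexOn_exp.comp_linearMap (LinearMap.mul ℝ ℝ (-a))
  exact (concaveOn_const 1 convex_univ).sub (hconv.smul hb)

theorem monotone_one_sub_mul_exp_neg_mul (ha : 0 ≤ a) (hb : 0 ≤ b) :
    Monotone (fun x => 1 - b * Real.exp (-(a * x))) := fun x y hxy => by
  have : Real.exp (-(a * y)) ≤ Real.exp (-(a * x)) := by gcongr
  dsimp only
  nlinarith

theorem one_sub_mul_exp_neg_mul_pos (ha : 0 ≤ a) (hb : b < 1) {x : ℝ} (hx : 0 ≤ x) :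
    0 < 1 - b * Real.exp (-(a * x)) := by
  have : Real.exp (-(a * x)) ≤ 1 := Real.exp_le_one_iff.2 (by nlinarith)
  nlinarith [Real.exp_pos (-(a * x))]

end LossProbability

/-- In the strong protection model (`λ > 0`, `q⁺ ∈ (0,1]`, `p⁺ ∈ (0,1)`,
`p⁻ = q⁻ = 0`), where `h(γ)` is the unique solution in `[0,1]` of
`h = (1 − γ)·(1 − (1 − p⁺)·exp(−λ·q⁺·h))`, the map
`γ ↦ 1 − (1 − p⁺)·exp(−λ·q⁺·h(γ))` is nonincreasing on `[0,1]`; equivalently, for `γ ∈ [0,1)`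
the ratio `h(γ)/(1 − γ)` is nonincreasing in `γ`. -/
theorem stmt_9 (lam qp pp : ℝ) (hlam : 0 < lam) (hqp : qp ∈ Ioc (0:ℝ) 1)
    (hpp : pp ∈ Ioo (0:ℝ) 1) (h : ℝ → ℝ)
    (hfix : ∀ γ ∈ Icc (0:ℝ) 1, h γ ∈ Icc (0:ℝ) 1 ∧
      h γ = (1 - γ) * (1 - (1 - pp) * Real.exp (-(lam * qp * h γ)))) :
    (∀ u ∈ Icc (0:ℝ) 1, ∀ v ∈ Icc (0:ℝ) 1, u ≤ v →
      1 - (1 - pp) * Real.exp (-(lam * qp * h v)) ≤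
        1 - (1 - pp) * Real.exp (-(lam * qp * h u))) ∧
    (∀ u ∈ Ico (0:ℝ) 1, ∀ v ∈ Ico (0:ℝ) 1, u ≤ v →
      h v / (1 - v) ≤ h u / (1 - u)) := by
  set F : ℝ → ℝ := fun x => 1 - (1 - pp) * Real.exp (-(lam * qp * x))
  have ha : 0 ≤ lam * qp := (mul_pos hlam hqp.1).le
  have hb : 0 ≤ 1 - pp := by linarith [hpp.2]
  have hpos : ∀ x ∈ Ici (0 : ℝ), 0 < F x :=
    fun x hx => one_sub_mul_exp_neg_mul_pos ha (by linarith [hpp.1]) hx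
  have hmono : StrictMonoOn (fun x => x / F x) (Ici 0) :=
    ((concaveOn_one_sub_mul_exp_neg_mul hb).subset (subset_univ _) (convex_Ici 0)).strictMonoOn_div
      hpos
  have hquot : ∀ γ ∈ Icc (0:ℝ) 1, h γ / F (h γ) = 1 - γ := fun γ hγ =>
    (div_eq_iff (hpos _ (hfix γ hγ).1.1).ne').2 (hfix γ hγ).2
  have hanti : AntitoneOn h (Icc 0 1) := by
    refine hmono.antitoneOn_of_antitoneOn_comp (fun γ hγ => (hfix γ hγ).1.1) ?_
    intro u hu v hv huv
    simp only [Function.comp_apply, hquot u hu, hquot v hv]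
    linarith
  have hF_anti : ∀ u ∈ Icc (0:ℝ) 1, ∀ v ∈ Icc (0:ℝ) 1, u ≤ v → F (h v) ≤ F (h u) :=
    fun u hu v hv huv => monotone_one_sub_mul_exp_neg_mul ha hb (hanti hu hv huv)
  refine ⟨hF_anti, fun u hu v hv huv => ?_⟩
  have hratio : ∀ γ ∈ Ico (0:ℝ) 1, h γ / (1 - γ) = F (h γ) := fun γ hγ => by
    rw [div_eq_iff (by linarith [hγ.2]), mul_comm]
    exact (hfix γ (Ico_subset_Icc_self hγ)).2
  rw [hratio u hu, hratio v hv]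
  exact hF_anti u (Ico_subset_Icc_self hu) v (Ico_subset_Icc_self hv) huv
end

section
/- In the strong protection model, if ℓ > 0 and c > p⁺·ℓ, then there exists γ ∈ [0,1) such that γ·c + h(γ)·ℓ < c. Consequently the price of anarchy P_a(c) = sup_{γ ∈ [0,1]} c/(γ·c + h(γ)·ℓ) is strictly larger than 1. -/
open Set

set_option maxHeartbeats 1600000 in
/-- In the strong protection model (`λ > 0`, `q⁺ ∈ (0,1]`, `p⁺ ∈ (0,1)`,
`p⁻ = q⁻ = 0`), where `h(γ)` is the unique solution in `[0,1]` of
`h = (1 − γ)·(1 − (1 − p⁺)·exp(−λ·q⁺·h))`: if `ℓ > 0` and `c > p⁺·ℓ`, then there exists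
`γ ∈ [0,1)` such that `γ·c + h(γ)·ℓ < c`.  Consequently the price of anarchy
`P_a(c) = sup_{γ ∈ [0,1]} c/(γ·c + h(γ)·ℓ)` is strictly larger than `1`. -/
theorem stmt_10 (lam qp pp : ℝ) (hlam : 0 < lam) (hqp : qp ∈ Ioc (0:ℝ) 1)
    (hpp : pp ∈ Ioo (0:ℝ) 1) (h : ℝ → ℝ)
    (hfix : ∀ γ ∈ Icc (0:ℝ) 1, h γ ∈ Icc (0:ℝ) 1 ∧
      h γ = (1 - γ) * (1 - (1 - pp) * Real.exp (-(lam * qp * h γ))))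
    (c ℓ : ℝ) (hℓ : 0 < ℓ) (hc : pp * ℓ < c) :
    (∃ γ ∈ Ico (0:ℝ) 1, γ * c + h γ * ℓ < c) ∧
    1 < sSup ((fun γ : ℝ => c / (γ * c + h γ * ℓ)) '' Icc (0:ℝ) 1) := by
  obtain ⟨hqp0, hqp1⟩ := hqp
  obtain ⟨hpp0, hpp1⟩ := hpp
  have hc0 : 0 < c := lt_trans (by positivity) hc
  set t : ℝ := lam * qp with ht
  have ht0 : 0 < t := by positivity
  set r : ℝ := 1 - c / ℓ with hr
  have hrlt : r < 1 - pp := by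
    have : pp < c / ℓ := (lt_div_iff₀ hℓ).2 hc
    simp only [hr]; linarith
  -- find ε ∈ (0,1] with r < (1-pp) * exp(-(t*ε))
  have key : ∃ ε : ℝ, 0 < ε ∧ ε ≤ 1 ∧ r < (1 - pp) * Real.exp (-(t * ε)) := by
    have hcont : Filter.Tendsto (fun ε : ℝ => (1 - pp) * Real.exp (-(t * ε)))
        (nhds 0) (nhds ((1 - pp) * Real.exp (-(t * 0)))) := by
      apply Filter.Tendsto.mul tendsto_const_nhds
      exact (Real.continuous_exp.comp (by continuity)).tendsto 0
    have hval : (1 - pp) * Real.exp (-(t * 0)) = 1 - pp := by simp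
    rw [hval] at hcont
    have hev : ∀ᶠ ε in nhds (0:ℝ), r < (1 - pp) * Real.exp (-(t * ε)) :=
      hcont.eventually (eventually_gt_nhds hrlt)
    rw [Metric.eventually_nhds_iff] at hev
    obtain ⟨δ, hδ0, hδ⟩ := hev
    refine ⟨min (δ/2) 1, by positivity, min_le_right _ _, hδ ?_⟩
    have h1 : min (δ/2) 1 ≤ δ/2 := min_le_left _ _
    have h2 : (0:ℝ) < min (δ/2) 1 := by positivity
    rw [Real.dist_eq, sub_zero, abs_of_pos h2]
    linarith
  obtain ⟨ε, hε0, hε1, hεr⟩ := key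
  set γ := 1 - ε with hγ
  have hγmem : γ ∈ Icc (0:ℝ) 1 := ⟨by linarith, by linarith⟩
  obtain ⟨⟨hh0, hh1⟩, hheq⟩ := hfix γ hγmem
  -- h γ ≤ ε
  have hexp_le : (1 - pp) * Real.exp (-(t * h γ)) ≤ 1 := by
    have := Real.exp_le_one_iff.2 (by nlinarith : -(t * h γ) ≤ 0)
    nlinarith [Real.exp_pos (-(t * h γ))]
  have hhle : h γ ≤ ε := by
    rw [hheq]
    have h1γ : 1 - γ = ε := by simp [hγ]
    rw [h1γ]
    nlinarith [mul_nonneg (by linarith : (0:ℝ) ≤ 1 - pp) (Real.exp_pos (-(t * h γ))).le]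
  -- exp(-(t * h γ)) ≥ exp(-(t * ε))
  have hexp_ge : Real.exp (-(t * ε)) ≤ Real.exp (-(t * h γ)) :=
    Real.exp_le_exp.2 (by nlinarith)
  have hrlt2 : r < (1 - pp) * Real.exp (-(t * h γ)) := by nlinarith
  -- h γ < ε * (c / ℓ)
  have hcl : 0 < c / ℓ := by positivity
  have hhlt : h γ < ε * (c / ℓ) := by
    rw [hheq]
    have h1γ : 1 - γ = ε := by simp [hγ]
    rw [h1γ]
    have : 1 - (1 - pp) * Real.exp (-(t * h γ)) < c / ℓ := by
      simp only [hr] at hrlt2; linarith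
    nlinarith
  have hcost : γ * c + h γ * ℓ < c := by
    have : h γ * ℓ < ε * c := by
      have := (mul_lt_mul_of_pos_right hhlt hℓ)
      calc h γ * ℓ < ε * (c / ℓ) * ℓ := this
        _ = ε * c := by field_simp
    simp only [hγ]; nlinarith
  have hγIco : γ ∈ Ico (0:ℝ) 1 := ⟨hγmem.1, by simp [hγ]; linarith⟩
  refine ⟨⟨γ, hγIco, hcost⟩, ?_⟩
  -- second part
  -- lower bound on denominator for all γ' ∈ [0,1]
  have hden : ∀ γ' ∈ Icc (0:ℝ) 1, pp * ℓ ≤ γ' * c + h γ' * ℓ := by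
    intro γ' hγ'
    obtain ⟨hγ'0, hγ'1⟩ := hγ'
    obtain ⟨⟨hh0', hh1'⟩, hheq'⟩ := hfix γ' ⟨hγ'0, hγ'1⟩
    have hexp_le' : Real.exp (-(t * h γ')) ≤ 1 :=
      Real.exp_le_one_iff.2 (neg_nonpos.2 (mul_nonneg ht0.le hh0'))
    have hge : (1 - γ') * pp ≤ h γ' := by
      rw [hheq']
      have : (1 - pp) * Real.exp (-(t * h γ')) ≤ 1 - pp := by
        nlinarith [Real.exp_pos (-(t * h γ'))]
      have hX : pp ≤ 1 - (1 - pp) * Real.exp (-(t * h γ')) := by linarith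
      exact mul_le_mul_of_nonneg_left hX (by linarith)
    have h1 : γ' * (pp * ℓ) ≤ γ' * c := mul_le_mul_of_nonneg_left hc.le hγ'0
    have h2 : (1 - γ') * pp * ℓ ≤ h γ' * ℓ := mul_le_mul_of_nonneg_right hge hℓ.le
    have h3 : γ' * (pp * ℓ) + (1 - γ') * pp * ℓ = pp * ℓ := by ring
    linarith
  have hbdd : BddAbove ((fun γ' : ℝ => c / (γ' * c + h γ' * ℓ)) '' Icc (0:ℝ) 1) := by
    refine ⟨c / (pp * ℓ), ?_⟩
    rintro x ⟨γ', hγ', rfl⟩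
    exact div_le_div_of_nonneg_left hc0.le (by positivity) (hden γ' hγ')
  have hmem : c / (γ * c + h γ * ℓ) ∈
      ((fun γ' : ℝ => c / (γ' * c + h γ' * ℓ)) '' Icc (0:ℝ) 1) :=
    ⟨γ, hγmem, rfl⟩
  have hdγ : 0 < γ * c + h γ * ℓ := lt_of_lt_of_le (by positivity) (hden γ hγmem)
  have hlt1 : 1 < c / (γ * c + h γ * ℓ) := (one_lt_div hdγ).2 hcost
  exact lt_csSup_of_lt hbdd hmem hlt1
end

section
/- In the weak protection model, h(1) < h(0), and consequently c⁰ < c¹, where c^γ = (p⁺ − p⁻)·ℓ·exp(−λ·q·h(γ)). -/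
open Set

/-- Weak protection model on an Erdős–Rényi graph (`λ > 0`, `q ∈ (0,1]`,
`ℓ > 0`, `0 < p⁻ < p⁺ ≤ 1`), where `h(γ)` is the unique solution in `[0,1]` of
`h = 1 − (1 − p⁺ + γ(p⁺ − p⁻))·exp(−λ·q·h)`.  Then `h(1) < h(0)` and consequently
`c⁰ < c¹`, where `c^γ = (p⁺ − p⁻)·ℓ·exp(−λ·q·h(γ))`. -/
theorem stmt_11 (lam q ℓ pm pp : ℝ) (hlam : 0 < lam) (hq : q ∈ Ioc (0:ℝ) 1)
    (hℓ : 0 < ℓ) (hpm : 0 < pm) (hpmpp : pm < pp) (hpp : pp ≤ 1)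
    (h0 h1 : ℝ)
    (hh0 : h0 ∈ Icc (0:ℝ) 1 ∧
      h0 = 1 - (1 - pp + 0 * (pp - pm)) * Real.exp (-(lam * q * h0)))
    (hh1 : h1 ∈ Icc (0:ℝ) 1 ∧
      h1 = 1 - (1 - pp + 1 * (pp - pm)) * Real.exp (-(lam * q * h1))) :
    h1 < h0 ∧
      (pp - pm) * ℓ * Real.exp (-(lam * q * h0)) < (pp - pm) * ℓ * Real.exp (-(lam * q * h1)) := by
  obtain ⟨hq0, hq1⟩ := hq
  have haa : 0 < lam * q := mul_pos hlam hq0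
  obtain ⟨⟨h00, h01⟩, he0⟩ := hh0
  obtain ⟨⟨h10, h11⟩, he1⟩ := hh1
  set E0 := Real.exp (-(lam * q * h0)) with hE0
  set E1 := Real.exp (-(lam * q * h1)) with hE1
  have E0pos : 0 < E0 := Real.exp_pos _
  have E1pos : 0 < E1 := Real.exp_pos _
  have he0' : h0 = 1 - (1 - pp) * E0 := by rw [he0]; ring
  have he1' : h1 = 1 - (1 - pm) * E1 := by rw [he1]; ring
  have hc0 : (0:ℝ) ≤ 1 - pp := by linarith
  have key : h1 < h0 := by
    by_contra hcon
    push_neg at hcon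
    rcases eq_or_lt_of_le hcon with heq | hlt
    · rw [← heq] at he1'
      have : E0 = E1 := by rw [hE0, hE1, heq]
      nlinarith [E0pos]
    · have h1pos : 0 < h1 := lt_of_le_of_lt h00 hlt
      set s := h0 / h1 with hsdef
      set t := 1 - s with htdef
      have hs0 : 0 ≤ s := div_nonneg h00 h1pos.le
      have hs1 : s < 1 := (div_lt_one h1pos).2 hlt
      have ht0 : 0 < t := by simp only [htdef]; linarith
      have hst : t + s = 1 := by simp [htdef]
      have hsh : s * h1 = h0 := div_mul_cancel₀ _ h1pos.ne'
      have hcx := convexOn_exp.2 (Set.mem_univ 0) (Set.mem_univ (-(lam * q * h1)))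
        ht0.le hs0 hst
      simp only [smul_eq_mul, Real.exp_zero, mul_zero, zero_add, mul_one] at hcx
      have harg : s * -(lam * q * h1) = -(lam * q * h0) := by rw [← hsh]; ring
      rw [harg] at hcx
      -- hcx : E0 ≤ t + s * E1
      have hmul := mul_le_mul_of_nonneg_left hcx hc0
      -- (1-pp)*E0 ≤ (1-pp)*(t + s*E1)
      nlinarith [mul_pos ht0 (hpm.trans hpmpp),
        mul_nonneg (mul_nonneg hs0 E1pos.le) (sub_nonneg.2 hpmpp.le)]
  refine ⟨key, ?_⟩
  have hexp : E0 < E1 := by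
    rw [hE0, hE1]
    apply Real.exp_lt_exp.2
    have := mul_lt_mul_of_pos_left key haa
    linarith
  have hpos : 0 < (pp - pm) * ℓ := mul_pos (by linarith) hℓ
  exact mul_lt_mul_of_pos_left hexp hpos
end

section
/- In the weak protection model, the incentive threshold is nondecreasing in the fraction of protected agents: if 0 ≤ u ≤ v ≤ 1 then c^u ≤ c^v. -/
open Set Real

/-!
Writing `c = λq` and `φ(t) = (1 - t) e^{ct}`, the fixed-point equation for `h(γ)` says
`φ(h(γ)) = 1 - p⁺ + γ(p⁺ - p⁻)`, whose right-hand side increases with `γ` and stays below `1`.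
Since `φ(0) = 1` and `e^{ct} ≥ 1 + ct`, any `x ∈ [0, 1]` with `φ(x) < 1` satisfies
`c(1 - x) < 1`, so `φ' = e^{ct}(c(1 - t) - 1)` is negative on `(x, ∞)`. Hence `h` is
nonincreasing, and `c^γ = (p⁺ - p⁻) ℓ e^{-c h(γ)}` is nondecreasing.
-/

noncomputable def oneSubMulExp (c t : ℝ) : ℝ := (1 - t) * exp (c * t)

lemma hasDerivAt_oneSubMulExp (c t : ℝ) :
    HasDerivAt (oneSubMulExp c) (exp (c * t) * (c * (1 - t) - 1)) t := by
  have h : HasDerivAt (fun s => (1 - s) * exp (c * s))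
      (-1 * exp (c * t) + (1 - t) * (exp (c * t) * (c * 1))) t :=
    ((hasDerivAt_id' t).const_sub 1).mul ((hasDerivAt_id' t).const_mul c).exp
  exact h.congr_deriv (by ring)

lemma oneSubMulExp_eq_iff (c t a : ℝ) :
    t = 1 - a * exp (-(c * t)) ↔ oneSubMulExp c t = a := by
  rw [oneSubMulExp, ← eq_div_iff (exp_pos _).ne', exp_neg, ← div_eq_mul_inv]
  constructor <;> intro h <;> linarith

lemma mul_one_sub_lt_one_of_oneSubMulExp_lt_one {c x : ℝ} (hx0 : 0 ≤ x) (hx1 : x ≤ 1)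
    (hφ : oneSubMulExp c x < 1) : c * (1 - x) < 1 := by
  have hx : 0 < x := hx0.lt_of_ne fun hx => by simp [oneSubMulExp, ← hx] at hφ
  have : (1 - x) * (c * x + 1) < 1 :=
    lt_of_le_of_lt (mul_le_mul_of_nonneg_left (add_one_le_exp _) (by linarith)) hφ
  nlinarith

lemma strictAntiOn_oneSubMulExp {c a : ℝ} (hc : 0 ≤ c) (ha : c * (1 - a) < 1) :
    StrictAntiOn (oneSubMulExp c) (Ici a) := by
  refine strictAntiOn_of_deriv_neg (convex_Ici a)
    (fun t _ => (hasDerivAt_oneSubMulExp c t).continuousAt.continuousWithinAt) ?_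
  intro t ht
  rw [interior_Ici] at ht
  rw [(hasDerivAt_oneSubMulExp c t).deriv]
  have : c * (1 - t) - 1 < 0 := by nlinarith [mem_Ioi.mp ht]
  exact mul_neg_of_pos_of_neg (exp_pos _) this

lemma le_of_oneSubMulExp_le {c x y : ℝ} (hc : 0 ≤ c) (hx0 : 0 ≤ x) (hx1 : x ≤ 1)
    (hφx : oneSubMulExp c x < 1) (hφ : oneSubMulExp c x ≤ oneSubMulExp c y) : y ≤ x := by
  by_contra! hxy
  have ha := mul_one_sub_lt_one_of_oneSubMulExp_lt_one hx0 hx1 hφx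
  exact (strictAntiOn_oneSubMulExp hc ha self_mem_Ici hxy.le hxy).not_ge hφ

theorem stmt_13_general (lam q ℓ pm pp : ℝ) (hlam : 0 < lam) (hq : q ∈ Ioc (0:ℝ) 1)
    (hℓ : 0 < ℓ) (hpm : 0 < pm) (hpmpp : pm < pp)
    (h : ℝ → ℝ)
    (hfix : ∀ γ ∈ Icc (0:ℝ) 1, h γ ∈ Icc (0:ℝ) 1 ∧
      h γ = 1 - (1 - pp + γ * (pp - pm)) * Real.exp (-(lam * q * h γ)))
    (u v : ℝ) (hu0 : 0 ≤ u) (huv : u ≤ v) (hv1 : v ≤ 1) :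
    (pp - pm) * ℓ * Real.exp (-(lam * q * h u)) ≤ (pp - pm) * ℓ * Real.exp (-(lam * q * h v)) := by
  have hc : 0 < lam * q := mul_pos hlam hq.1
  obtain ⟨⟨hu_nonneg, hu_le_one⟩, hu_eq⟩ := hfix u ⟨hu0, huv.trans hv1⟩
  obtain ⟨-, hv_eq⟩ := hfix v ⟨hu0.trans huv, hv1⟩
  rw [oneSubMulExp_eq_iff] at hu_eq hv_eq
  have hu_lt_one : oneSubMulExp (lam * q) (h u) < 1 := by
    rw [hu_eq]; nlinarith [huv.trans hv1]
  have hvu : h v ≤ h u := by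
    refine le_of_oneSubMulExp_le hc.le hu_nonneg hu_le_one hu_lt_one ?_
    rw [hu_eq, hv_eq]; nlinarith
  have hpℓ : 0 ≤ (pp - pm) * ℓ := mul_nonneg (by linarith) hℓ.le
  gcongr

/-- In the weak protection model (`λ > 0`, `q ∈ (0,1]`, `ℓ > 0`,
`0 < p⁻ < p⁺ ≤ 1`), where `h(γ)` is the unique solution in `[0,1]` of
`h = 1 − (1 − p⁺ + γ(p⁺ − p⁻))·exp(−λ·q·h)` and `c^γ = (p⁺ − p⁻)·ℓ·exp(−λ·q·h(γ))`,
the incentive threshold is nondecreasing in the fraction of protected agents: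
if `0 ≤ u ≤ v ≤ 1` then `c^u ≤ c^v`. -/
theorem stmt_13 (lam q ℓ pm pp : ℝ) (hlam : 0 < lam) (hq : q ∈ Ioc (0:ℝ) 1)
    (hℓ : 0 < ℓ) (hpm : 0 < pm) (hpmpp : pm < pp) (hpp : pp ≤ 1)
    (h : ℝ → ℝ)
    (hfix : ∀ γ ∈ Icc (0:ℝ) 1, h γ ∈ Icc (0:ℝ) 1 ∧
      h γ = 1 - (1 - pp + γ * (pp - pm)) * Real.exp (-(lam * q * h γ)))
    (u v : ℝ) (hu0 : 0 ≤ u) (huv : u ≤ v) (hv1 : v ≤ 1) :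
    (pp - pm) * ℓ * Real.exp (-(lam * q * h u)) ≤ (pp - pm) * ℓ * Real.exp (-(lam * q * h v)) :=
  stmt_13_general lam q ℓ pm pp hlam hq hℓ hpm hpmpp h hfix u v hu0 huv hv1
end

section
/- Suppose u : ℝ → ℝ is strictly increasing, and let w, ℓ, c ∈ ℝ and p^S, p^N ∈ [0,1]. Let π^N, π^S ∈ ℝ satisfy u(w − p^N·ℓ − π^N) = p^N·u(w − ℓ) + (1 − p^N)·u(w) and u(w − c − p^S·ℓ − π^S) = p^S·u(w − ℓ − c) + (1 − p^S)·u(w − c). Then the expected utility from investing exceeds that from not investing, i.e., p^S·u(w − ℓ − c) + (1 − p^S)·u(w − c) > p^N·u(w − ℓ) + (1 − p^N)·u(w), if and only if c < (p^N − p^S)·ℓ + π^N − π^S. -/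
open Set

/-- Let `u : ℝ → ℝ` be strictly increasing, `w, ℓ, c ∈ ℝ`, `p^S, p^N ∈ [0,1]`,
and let the risk premia `π^N, π^S` satisfy
`u(w − p^N·ℓ − π^N) = p^N·u(w − ℓ) + (1 − p^N)·u(w)` and
`u(w − c − p^S·ℓ − π^S) = p^S·u(w − ℓ − c) + (1 − p^S)·u(w − c)`.  Then the expected utility
from investing exceeds that from not investing iff `c < (p^N − p^S)·ℓ + π^N − π^S`. -/
theorem stmt_15 (u : ℝ → ℝ) (hmono : StrictMono u)
    (w ℓ c : ℝ) (pS pN : ℝ) (hpS : pS ∈ Icc (0:ℝ) 1) (hpN : pN ∈ Icc (0:ℝ) 1)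
    (πN πS : ℝ)
    (hπN : u (w - pN * ℓ - πN) = pN * u (w - ℓ) + (1 - pN) * u w)
    (hπS : u (w - c - pS * ℓ - πS) = pS * u (w - ℓ - c) + (1 - pS) * u (w - c)) :
    pS * u (w - ℓ - c) + (1 - pS) * u (w - c) > pN * u (w - ℓ) + (1 - pN) * u w ↔
      c < (pN - pS) * ℓ + πN - πS := by
  rw [← hπN, ← hπS, gt_iff_lt, hmono.lt_iff_lt]
  constructor <;> intro h <;> linarith
end
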